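/- Consider the coevolutionary model in which agents update their actions and opinions by the best-response update rule, and suppose Assumptions 1 and 2 hold. Then for every initial state z(0) ∈ {-1,+1}^n × [-1,1]^n, the state z(t) converges to a steady state z* = (x*, y*): there exists a finite time τ such that x(t) = x* for all t ≥ τ, and lim_{t→∞} y(t) = y*. -/

import Mathlib

/-!
Because `A` and `W` are symmetric, the game has an exact potential `Ψ`, a quadratic function of
actions and opinions. A best response of one agent never decreases `Ψ`, and when it flips the
agent's action it raises `Ψ` by at least `(1 - β) λ (2 + α) a_ii > 0`. The state stays in a
compact cube on which `Ψ` is bounded, so actions flip only finitely often. Once the actions are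
frozen, each activation replaces `y_i` by an affine function of `y` that contracts the sup
distance by `(1 - λ)(1 - γ) < 1`; as every agent activates in each window of length `T`, the sup
distance to the fixed point of this map shrinks by that factor over each window.
-/

open Finset Matrix Filter

/-- The quantity `δ_i(z)`. -/
noncomputable def deltaFn {n : ℕ} (A W : Fin n → Fin n → ℝ) (α lam β γ : ℝ)
    (u x y : Fin n → ℝ) (i : Fin n) : ℝ :=
  2 * lam * β * (1 - lam) * ((1 - γ) * ∑ j, W i j * y j + γ * u i)
    + (1 - β) * lam / 2 * ∑ j, A i j * (2 * x j + α * (1 + x j))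

/-- `S(d; x_i)`: `+1` if `d > 0`, `-1` if `d < 0`, and `x_i` if `d = 0`. -/
noncomputable def brSign (d xi : ℝ) : ℝ := if 0 < d then 1 else if d < 0 then -1 else xi

/-- A nonnegative matrix (given as a function) is irreducible if for every pair of indices
some power of the matrix has a positive entry there. -/
def FunIrreducible {n : ℕ} (W : Fin n → Fin n → ℝ) : Prop :=
  ∀ i j, ∃ k : ℕ, 0 < ((Matrix.of W) ^ k) i j

open Function Topology
open scoped NNReal

section WeightedSum

variable {ι : Type*} [Fintype ι] {w : ι → ℝ}

theorem abs_sum_mul_le (hw : ∀ j, 0 ≤ w j) (hsum : ∑ j, w j = 1) {z : ι → ℝ} {C : ℝ}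
    (hz : ∀ j, |z j| ≤ C) : |∑ j, w j * z j| ≤ C :=
  calc |∑ j, w j * z j| ≤ ∑ j, w j * |z j| := by
        simpa only [abs_mul, abs_of_nonneg (hw _)] using
          abs_sum_le_sum_abs (fun j => w j * z j) univ
    _ ≤ ∑ j, w j * C := sum_le_sum fun j _ => mul_le_mul_of_nonneg_left (hz j) (hw j)
    _ = C := by rw [← sum_mul, hsum, one_mul]

theorem dist_sum_mul_le (hw : ∀ j, 0 ≤ w j) (hsum : ∑ j, w j = 1) (z v : ι → ℝ) :
    dist (∑ j, w j * z j) (∑ j, w j * v j) ≤ dist z v := by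
  rw [Real.dist_eq, ← sum_sub_distrib]
  simp_rw [← mul_sub]
  exact abs_sum_mul_le hw hsum fun j =>
    (Real.dist_eq _ _).symm.trans_le (dist_le_pi_dist z v j)

end WeightedSum

theorem abs_one_sub_mul_add_mul_le {a b t C : ℝ} (ht₀ : 0 ≤ t) (ht₁ : t ≤ 1) (ha : |a| ≤ C)
    (hb : |b| ≤ C) : |(1 - t) * a + t * b| ≤ C := by
  rw [abs_le] at *
  constructor <;> nlinarith

section Update

variable {ι R : Type*} [Fintype ι] [DecidableEq ι] [CommRing R]

omit [Fintype ι] in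
theorem update_eq_add_single (x : ι → R) (i : ι) (a : R) :
    update x i a = x + Pi.single i (a - x i) := by
  ext j
  rcases eq_or_ne j i with rfl | h <;> simp [*]

theorem sum_mul_update (c x : ι → R) (i : ι) (a : R) :
    ∑ j, c j * update x i a j = ∑ j, c j * x j + c i * (a - x i) := by
  simp [update_eq_add_single, mul_add, sum_add_distrib, Pi.single_apply]

theorem sum_update_mul_update (x y : ι → R) (i : ι) (a b : R) :
    ∑ j, update x i a j * update y i b j = ∑ j, x j * y j + (a * b - x i * y i) := by
  simp only [update_eq_add_single, Pi.add_apply, Pi.single_apply, mul_add, add_mul, ite_mul,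
    zero_mul, mul_ite, mul_zero, sum_add_distrib, sum_ite_eq', mem_univ, if_true]
  ring

theorem sum_sum_mul_update_mul_update {M : ι → ι → R} (hM : ∀ j k, M j k = M k j)
    (x : ι → R) (i : ι) (a : R) :
    ∑ j, ∑ k, M j k * update x i a j * update x i a k =
      ∑ j, ∑ k, M j k * x j * x k + 2 * (a - x i) * ∑ k, M i k * x k
        + (a - x i) ^ 2 * M i i := by
  have h : ∑ k, M i k * (a - x i) * x k = (a - x i) * ∑ k, M i k * x k := by
    rw [mul_sum]
    exact sum_congr rfl fun _ _ => by ring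
  simp only [update_eq_add_single, Pi.add_apply, Pi.single_apply, mul_add, add_mul,
    sum_add_distrib, mul_ite, ite_mul, mul_zero, zero_mul, sum_ite_eq', mem_univ, if_true,
    sum_ite_irrel, sum_const_zero, hM _ i, ← sum_mul]
  linear_combination h

end Update

theorem eventually_not_of_monotone_of_bddAbove {f : ℕ → ℝ} {P : ℕ → Prop} {ε : ℝ}
    (hf : Monotone f) (hbdd : BddAbove (Set.range f)) (hε : 0 < ε)
    (hP : ∀ t, P t → f t + ε ≤ f (t + 1)) :
    ∀ᶠ t in atTop, ¬ P t := by
  have hL := tendsto_atTop_ciSup hf hbdd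
  have hdiff : Tendsto (fun t => f (t + 1) - f t) atTop (𝓝 0) := by
    simpa using ((tendsto_add_atTop_iff_nat 1).2 hL).sub hL
  filter_upwards [hdiff.eventually (eventually_lt_nhds hε)] with t ht hPt
  linarith [hP t hPt]

theorem exists_forall_ge_eq_of_eventually_succ_eq {α : Type*} {f : ℕ → α}
    (h : ∀ᶠ t in atTop, f (t + 1) = f t) : ∃ τ, ∀ t, τ ≤ t → f t = f τ := by
  obtain ⟨τ, hτ⟩ := eventually_atTop.1 h
  refine ⟨τ, fun t ht => ?_⟩
  induction t, ht using Nat.le_induction with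
  | base => rfl
  | succ t ht ih => rw [hτ t ht, ih]

section AsyncContraction

variable {ι E : Type*} [Fintype ι]

theorem tendsto_of_async_contraction [PseudoMetricSpace E] {F : (ι → E) → ι → E} {p : ι → E}
    {ρ : ℝ≥0} (hρ : ρ < 1) (hF : ∀ z i, dist (F z i) (p i) ≤ ρ * dist z p)
    {y : ℕ → ι → E} {σ : ℕ → ι} (hact : ∀ t, y (t + 1) (σ t) = F (y t) (σ t))
    (hkeep : ∀ t j, j ≠ σ t → y (t + 1) j = y t j)
    {T : ℕ} (hT : ∀ t i, ∃ s, t ≤ s ∧ s < t + T ∧ σ s = i) :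
    Tendsto y atTop (𝓝 p) := by
  set D := fun t => dist (y t) p
  have hρD : ∀ t, ρ * D t ≤ D t := fun t =>
    mul_le_of_le_one_left dist_nonneg (by exact_mod_cast hρ.le)
  have hanti : Antitone D := by
    refine antitone_nat_of_succ_le fun t => (dist_pi_le_iff dist_nonneg).2 fun j => ?_
    rcases eq_or_ne j (σ t) with rfl | hj
    · rw [hact]
      exact (hF _ _).trans (hρD t)
    · rw [hkeep t j hj]
      exact dist_le_pi_dist _ _ j
  have hwindow : ∀ t d j, (∃ s, t ≤ s ∧ s < t + d ∧ σ s = j) →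
      dist (y (t + d) j) (p j) ≤ ρ * D t := by
    intro t d
    induction d with
    | zero => rintro j ⟨s, h₁, h₂, -⟩; omega
    | succ d ih =>
      rintro j ⟨s, h₁, h₂, rfl⟩
      rcases eq_or_ne (σ s) (σ (t + d)) with hj | hj
      · rw [← add_assoc, hj, hact]
        exact (hF _ _).trans (mul_le_mul_of_nonneg_left (hanti (Nat.le_add_right t d)) ρ.2)
      · have hs : s < t + d := lt_of_le_of_ne (by omega) fun h => hj (h ▸ rfl)
        rw [← add_assoc, hkeep _ _ hj]
        exact ih _ ⟨s, h₁, hs, rfl⟩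
  have hstep : ∀ t, D (t + T) ≤ ρ * D t := fun t =>
    (dist_pi_le_iff (by positivity)).2 fun j => hwindow t T j (hT t j)
  have hL := tendsto_atTop_ciInf hanti ⟨0, by rintro _ ⟨t, rfl⟩; exact dist_nonneg⟩
  set L := ⨅ t, D t
  have hL₀ : 0 ≤ L := ge_of_tendsto' hL fun t => dist_nonneg
  have hLρ : L ≤ ρ * L :=
    le_of_tendsto_of_tendsto' ((tendsto_add_atTop_iff_nat T).2 hL) (hL.const_mul (ρ : ℝ)) hstep
  have hL0 : L = 0 := by
    have : (ρ : ℝ) < 1 := hρ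
    nlinarith
  rw [tendsto_iff_dist_tendsto_zero]
  rwa [hL0] at hL

theorem exists_tendsto_of_async_contraction [MetricSpace E] [CompleteSpace E]
    {F : (ι → E) → ι → E} {ρ : ℝ≥0} (hρ : ρ < 1)
    (hF : ∀ z w i, dist (F z i) (F w i) ≤ ρ * dist z w)
    {y : ℕ → ι → E} {σ : ℕ → ι} (hact : ∀ t, y (t + 1) (σ t) = F (y t) (σ t))
    (hkeep : ∀ t j, j ≠ σ t → y (t + 1) j = y t j)
    {T : ℕ} (hT : ∀ t i, ∃ s, t ≤ s ∧ s < t + T ∧ σ s = i) :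
    ∃ p, Tendsto y atTop (𝓝 p) := by
  have : Nonempty (ι → E) := ⟨y 0⟩
  have hK : ContractingWith ρ F :=
    ⟨hρ, LipschitzWith.of_dist_le_mul fun z w =>
      (dist_pi_le_iff (by positivity)).2 (hF z w)⟩
  refine ⟨ContractingWith.fixedPoint F hK, tendsto_of_async_contraction hρ (fun z i => ?_)
    hact hkeep hT⟩
  simpa only [hK.fixedPoint_isFixedPt.eq] using hF z (ContractingWith.fixedPoint F hK) i

end AsyncContraction

theorem brSign_eq_neg_one_or_one {d xi : ℝ} (h : xi = -1 ∨ xi = 1) :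
    brSign d xi = -1 ∨ brSign d xi = 1 := by
  unfold brSign
  split_ifs <;> simp [h]

theorem brSign_sub_mul_nonneg {d xi : ℝ} (h : |xi| ≤ 1) : 0 ≤ (brSign d xi - xi) * d := by
  rw [abs_le] at h
  unfold brSign
  split_ifs with h₁ h₂
  · exact mul_nonneg (by linarith) h₁.le
  · exact mul_nonneg_of_nonpos_of_nonpos (by linarith) h₂.le
  · simp [le_antisymm (not_lt.1 h₁) (not_lt.1 h₂)]

theorem abs_brSign_le_one {d xi : ℝ} (h : |xi| ≤ 1) : |brSign d xi| ≤ 1 := by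
  unfold brSign
  split_ifs <;> simp [h]

section Model

variable {n : ℕ} (A W : Fin n → Fin n → ℝ) (α lam β γ : ℝ) (u : Fin n → ℝ)

noncomputable def opinionUpdate (z : Fin n → ℝ) (i : Fin n) (ξ : ℝ) : ℝ :=
  (1 - lam) * ((1 - γ) * (∑ j, W i j * z j) + γ * u i) + lam * ξ

noncomputable def brAction (x y : Fin n → ℝ) (i : Fin n) : ℝ :=
  brSign (deltaFn A W α lam β γ u x y i) (x i)

noncomputable def potential (x y : Fin n → ℝ) : ℝ :=
  (1 - β) * lam * (2 + α) / 4 * (∑ j, ∑ k, A j k * x j * x k)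
  + (1 - β) * lam * α / 2 * (∑ j, x j)
  + 2 * lam * β * (∑ j, x j * y j)
  - β * (∑ j, y j * y j)
  + β * ((1 - lam) * (1 - γ)) * (∑ j, ∑ k, W j k * y j * y k)
  + 2 * β * (1 - lam) * γ * (∑ j, u j * y j)

structure IsBRTrajectory (x y : ℕ → Fin n → ℝ) (σ : ℕ → Fin n) : Prop where
  action_succ : ∀ t, x (t + 1) =
    update (x t) (σ t) (brAction A W α lam β γ u (x t) (y t) (σ t))
  opinion_succ : ∀ t, y (t + 1) = update (y t) (σ t)
    (opinionUpdate W lam γ u (y t) (σ t) (brAction A W α lam β γ u (x t) (y t) (σ t)))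

variable {A W α lam β γ u}

theorem potential_update_sub (hArow : ∀ j, ∑ k, A j k = 1) (hAsymm : ∀ j k, A j k = A k j)
    (hWsymm : ∀ j k, W j k = W k j) (x y : Fin n → ℝ) (i : Fin n) (ξ : ℝ) :
    potential A W α lam β γ u (update x i ξ) (update y i (opinionUpdate W lam γ u y i ξ))
        - potential A W α lam β γ u x y =
      (1 - β) * lam * (2 + α) / 4 * (ξ - x i) ^ 2 * A i i
      + (ξ - x i) * deltaFn A W α lam β γ u x y i
      + 2 * lam * β * (ξ - x i) * (y i - opinionUpdate W lam γ u y i ξ + lam * ξ)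
      + β * (1 + (1 - lam) * (1 - γ) * W i i) * (opinionUpdate W lam γ u y i ξ - y i) ^ 2 := by
  have hA : ∑ j, A i j * (2 * x j + α * (1 + x j)) = (2 + α) * ∑ j, A i j * x j + α :=
    calc ∑ j, A i j * (2 * x j + α * (1 + x j))
        = (2 + α) * ∑ j, A i j * x j + α * ∑ j, A i j := by
          rw [mul_sum, mul_sum, ← sum_add_distrib]
          exact sum_congr rfl fun j _ => by ring
      _ = (2 + α) * ∑ j, A i j * x j + α := by rw [hArow, mul_one]
  rw [potential, potential, sum_sum_mul_update_mul_update hAsymm,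
    sum_sum_mul_update_mul_update hWsymm, sum_update_mul_update, sum_update_mul_update,
    sum_mul_update u, deltaFn, hA]
  have h1 : ∑ j, update x i ξ j = ∑ j, x j + (ξ - x i) := by
    simpa using sum_mul_update 1 x i ξ
  rw [h1]
  simp only [opinionUpdate]
  ring

theorem potential_le_update_of_eq (hW : ∀ j k, 0 ≤ W j k) (hArow : ∀ j, ∑ k, A j k = 1)
    (hAsymm : ∀ j k, A j k = A k j) (hWsymm : ∀ j k, W j k = W k j) (hβ : 0 ≤ β)
    (hρ : 0 ≤ (1 - lam) * (1 - γ)) {x y : Fin n → ℝ} {i : Fin n}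
    (h : brAction A W α lam β γ u x y i = x i) :
    potential A W α lam β γ u x y ≤
      potential A W α lam β γ u (update x i (brAction A W α lam β γ u x y i))
        (update y i (opinionUpdate W lam γ u y i (brAction A W α lam β γ u x y i))) := by
  have hsq : 0 ≤ β * (1 + (1 - lam) * (1 - γ) * W i i) *
      (opinionUpdate W lam γ u y i (x i) - y i) ^ 2 :=
    mul_nonneg (mul_nonneg hβ (by nlinarith [hW i i])) (sq_nonneg _)
  rw [h, ← sub_nonneg, potential_update_sub hArow hAsymm hWsymm, sub_self]
  linarith

theorem potential_add_le_update_of_ne (hW : ∀ j k, 0 ≤ W j k) (hArow : ∀ j, ∑ k, A j k = 1)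
    (hAsymm : ∀ j k, A j k = A k j) (hWsymm : ∀ j k, W j k = W k j) (hβ : 0 ≤ β)
    (hρ : 0 ≤ (1 - lam) * (1 - γ)) {x y : Fin n → ℝ} {i : Fin n} (hx : x i = -1 ∨ x i = 1)
    (h : brAction A W α lam β γ u x y i ≠ x i) :
    potential A W α lam β γ u x y + (1 - β) * lam * (2 + α) * A i i ≤
      potential A W α lam β γ u (update x i (brAction A W α lam β γ u x y i))
        (update y i (opinionUpdate W lam γ u y i (brAction A W α lam β γ u x y i))) := by
  set ξ := brAction A W α lam β γ u x y i
  set η := opinionUpdate W lam γ u y i ξ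
  have hδ : 0 ≤ (ξ - x i) * deltaFn A W α lam β γ u x y i :=
    brSign_sub_mul_nonneg (by rcases hx with hx | hx <;> simp [hx])
  have hb : ξ = -1 ∨ ξ = 1 := brSign_eq_neg_one_or_one hx
  have hξ : ξ ^ 2 = 1 := by rcases hb with hb | hb <;> rw [hb] <;> norm_num
  have hxi : x i = -ξ := by
    rcases hx with hx | hx <;> rcases hb with hb | hb <;> simp [hx, hb] at h ⊢
  -- With `x i = -ξ` and `ξ ^ 2 = 1`, the term `2 λ β (ξ - x i) (y i - η + λ ξ)` of
  -- `potential_update_sub` completes `β (η - y i) ^ 2` to the square `β (η - y i - 2 λ ξ) ^ 2`.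
  have hΔ : potential A W α lam β γ u (update x i ξ) (update y i η)
      - potential A W α lam β γ u x y =
      (1 - β) * lam * (2 + α) * A i i + (ξ - x i) * deltaFn A W α lam β γ u x y i
        + β * (η - y i - 2 * lam * ξ) ^ 2
        + β * ((1 - lam) * (1 - γ) * W i i) * (η - y i) ^ 2 := by
    rw [potential_update_sub hArow hAsymm hWsymm, hxi]
    linear_combination (1 - β) * lam * (2 + α) * A i i * hξ
  have h₁ : 0 ≤ β * (η - y i - 2 * lam * ξ) ^ 2 := mul_nonneg hβ (sq_nonneg _)
  have h₂ : 0 ≤ β * ((1 - lam) * (1 - γ) * W i i) * (η - y i) ^ 2 :=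
    mul_nonneg (mul_nonneg hβ (mul_nonneg hρ (hW i i))) (sq_nonneg _)
  linarith

theorem abs_opinionUpdate_le_one (hW : ∀ j k, 0 ≤ W j k) (hWrow : ∀ j, ∑ k, W j k = 1)
    (hlam : lam ∈ Set.Icc (0 : ℝ) 1) (hγ : γ ∈ Set.Icc (0 : ℝ) 1) (hu : ∀ j, |u j| ≤ 1)
    {z : Fin n → ℝ} (hz : ∀ j, |z j| ≤ 1) (i : Fin n) {ξ : ℝ} (hξ : |ξ| ≤ 1) :
    |opinionUpdate W lam γ u z i ξ| ≤ 1 :=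
  abs_one_sub_mul_add_mul_le hlam.1 hlam.2
    (abs_one_sub_mul_add_mul_le hγ.1 hγ.2 (abs_sum_mul_le (hW i) (hWrow i) hz) (hu i)) hξ

theorem dist_opinionUpdate_le (hW : ∀ j k, 0 ≤ W j k) (hWrow : ∀ j, ∑ k, W j k = 1)
    (hρ : 0 ≤ (1 - lam) * (1 - γ)) (z w : Fin n → ℝ) (i : Fin n) (ξ : ℝ) :
    dist (opinionUpdate W lam γ u z i ξ) (opinionUpdate W lam γ u w i ξ) ≤
      (1 - lam) * (1 - γ) * dist z w := by
  have h : opinionUpdate W lam γ u z i ξ - opinionUpdate W lam γ u w i ξ =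
      (1 - lam) * (1 - γ) * (∑ j, W i j * z j - ∑ j, W i j * w j) := by
    simp only [opinionUpdate]
    ring
  rw [Real.dist_eq, h, abs_mul, abs_of_nonneg hρ, ← Real.dist_eq]
  exact mul_le_mul_of_nonneg_left (dist_sum_mul_le (hW i) (hWrow i) z w) hρ

theorem bddAbove_potential {x y : ℕ → Fin n → ℝ} (hx : ∀ t j, |x t j| ≤ 1)
    (hy : ∀ t j, |y t j| ≤ 1) :
    BddAbove (Set.range fun t => potential A W α lam β γ u (x t) (y t)) := by
  have hcont : Continuous fun z : (Fin n → ℝ) × (Fin n → ℝ) =>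
      potential A W α lam β γ u z.1 z.2 := by
    unfold potential
    fun_prop
  refine ((isCompact_closedBall 0 1).bddAbove_image hcont.continuousOn).mono ?_
  rintro _ ⟨t, rfl⟩
  refine ⟨(x t, y t), ?_, rfl⟩
  simp only [Metric.mem_closedBall, dist_zero_right, norm_prod_le_iff,
    pi_norm_le_iff_of_nonneg zero_le_one, Real.norm_eq_abs]
  exact ⟨hx t, hy t⟩

namespace IsBRTrajectory

variable {x y : ℕ → Fin n → ℝ} {σ : ℕ → Fin n}

theorem action_eq_neg_one_or_one (h : IsBRTrajectory A W α lam β γ u x y σ)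
    (h0 : ∀ j, x 0 j = -1 ∨ x 0 j = 1) (t : ℕ) (j : Fin n) : x t j = -1 ∨ x t j = 1 := by
  induction t generalizing j with
  | zero => exact h0 j
  | succ t ih =>
    rw [h.action_succ t]
    rcases eq_or_ne j (σ t) with rfl | hj
    · rw [update_self]
      exact brSign_eq_neg_one_or_one (ih _)
    · rw [update_of_ne hj]
      exact ih j

theorem abs_opinion_le_one (h : IsBRTrajectory A W α lam β γ u x y σ)
    (hW : ∀ j k, 0 ≤ W j k) (hWrow : ∀ j, ∑ k, W j k = 1)
    (hlam : lam ∈ Set.Icc (0 : ℝ) 1) (hγ : γ ∈ Set.Icc (0 : ℝ) 1) (hu : ∀ j, |u j| ≤ 1)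
    (hx : ∀ t j, |x t j| ≤ 1) (h0 : ∀ j, |y 0 j| ≤ 1) (t : ℕ) (j : Fin n) : |y t j| ≤ 1 := by
  induction t generalizing j with
  | zero => exact h0 j
  | succ t ih =>
    rw [h.opinion_succ t]
    rcases eq_or_ne j (σ t) with rfl | hj
    · rw [update_self]
      exact abs_opinionUpdate_le_one hW hWrow hlam hγ hu ih _ (abs_brSign_le_one (hx t _))
    · rw [update_of_ne hj]
      exact ih j

theorem potential_le_succ (h : IsBRTrajectory A W α lam β γ u x y σ)
    (hW : ∀ j k, 0 ≤ W j k) (hArow : ∀ j, ∑ k, A j k = 1)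
    (hAsymm : ∀ j k, A j k = A k j) (hWsymm : ∀ j k, W j k = W k j) (hβ : 0 ≤ β)
    (hρ : 0 ≤ (1 - lam) * (1 - γ)) {t : ℕ} (hxt : x (t + 1) = x t) :
    potential A W α lam β γ u (x t) (y t) ≤
      potential A W α lam β γ u (x (t + 1)) (y (t + 1)) := by
  rw [h.action_succ t, update_eq_self_iff] at hxt
  rw [h.action_succ t, h.opinion_succ t]
  exact potential_le_update_of_eq hW hArow hAsymm hWsymm hβ hρ hxt

theorem potential_add_le_succ (h : IsBRTrajectory A W α lam β γ u x y σ)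
    (hW : ∀ j k, 0 ≤ W j k) (hArow : ∀ j, ∑ k, A j k = 1)
    (hAsymm : ∀ j k, A j k = A k j) (hWsymm : ∀ j k, W j k = W k j) (hβ : 0 ≤ β)
    (hρ : 0 ≤ (1 - lam) * (1 - γ)) (hx : ∀ t j, x t j = -1 ∨ x t j = 1) {t : ℕ}
    (hxt : x (t + 1) ≠ x t) :
    potential A W α lam β γ u (x t) (y t) + (1 - β) * lam * (2 + α) * A (σ t) (σ t) ≤
      potential A W α lam β γ u (x (t + 1)) (y (t + 1)) := by
  rw [h.action_succ t, Ne, update_eq_self_iff] at hxt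
  rw [h.action_succ t, h.opinion_succ t]
  exact potential_add_le_update_of_ne hW hArow hAsymm hWsymm hβ hρ (hx t _) hxt

theorem eventually_action_succ_eq (h : IsBRTrajectory A W α lam β γ u x y σ)
    (hW : ∀ j k, 0 ≤ W j k) (hArow : ∀ j, ∑ k, A j k = 1)
    (hWrow : ∀ j, ∑ k, W j k = 1) (hAsymm : ∀ j k, A j k = A k j)
    (hWsymm : ∀ j k, W j k = W k j) (hAdiag : ∀ j, 0 < A j j) (hα : 0 ≤ α)
    (hlam : lam ∈ Set.Ioc (0 : ℝ) 1) (hβ : β ∈ Set.Ico (0 : ℝ) 1)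
    (hγ : γ ∈ Set.Icc (0 : ℝ) 1) (hu : ∀ j, |u j| ≤ 1) (h0x : ∀ j, x 0 j = -1 ∨ x 0 j = 1)
    (h0y : ∀ j, |y 0 j| ≤ 1) :
    ∀ᶠ t in atTop, x (t + 1) = x t := by
  have hx := h.action_eq_neg_one_or_one h0x
  have hxabs : ∀ t j, |x t j| ≤ 1 := fun t j => by rcases hx t j with hj | hj <;> simp [hj]
  have hy := h.abs_opinion_le_one hW hWrow (Set.Ioc_subset_Icc_self hlam) hγ hu hxabs h0y
  have hρ : 0 ≤ (1 - lam) * (1 - γ) := mul_nonneg (by linarith [hlam.2]) (by linarith [hγ.2])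
  have hgain : ∀ i, 0 < (1 - β) * lam * (2 + α) * A i i := fun i =>
    mul_pos (mul_pos (mul_pos (by linarith [hβ.2]) hlam.1) (by linarith)) (hAdiag i)
  have hmono : Monotone fun t => potential A W α lam β γ u (x t) (y t) := by
    refine monotone_nat_of_le_succ fun t => ?_
    by_cases hxt : x (t + 1) = x t
    · exact h.potential_le_succ hW hArow hAsymm hWsymm hβ.1 hρ hxt
    · linarith [h.potential_add_le_succ hW hArow hAsymm hWsymm hβ.1 hρ hx hxt, hgain (σ t)]
  have hflips : ∀ i, ∀ᶠ t in atTop, ¬ (σ t = i ∧ x (t + 1) ≠ x t) := fun i =>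
    eventually_not_of_monotone_of_bddAbove hmono (bddAbove_potential hxabs hy) (hgain i)
      fun t ⟨hi, hxt⟩ => hi ▸ h.potential_add_le_succ hW hArow hAsymm hWsymm hβ.1 hρ hx hxt
  filter_upwards [eventually_all.2 hflips] with t ht
  by_contra hxt
  exact ht (σ t) ⟨rfl, hxt⟩

theorem exists_tendsto_opinion (h : IsBRTrajectory A W α lam β γ u x y σ)
    (hW : ∀ j k, 0 ≤ W j k) (hWrow : ∀ j, ∑ k, W j k = 1)
    (hlam : lam ∈ Set.Ioc (0 : ℝ) 1) (hγ : γ ∈ Set.Icc (0 : ℝ) 1)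
    {T : ℕ} (hT : ∀ t i, ∃ s, t ≤ s ∧ s < t + T ∧ σ s = i)
    {τ : ℕ} (hτ : ∀ t, τ ≤ t → x t = x τ) :
    ∃ p, Tendsto y atTop (𝓝 p) := by
  have hρ : 0 ≤ (1 - lam) * (1 - γ) := mul_nonneg (by linarith [hlam.2]) (by linarith [hγ.2])
  have hρ1 : (⟨(1 - lam) * (1 - γ), hρ⟩ : ℝ≥0) < 1 := by
    show (1 - lam) * (1 - γ) < 1
    nlinarith [hlam.1, hlam.2, hγ.1, hγ.2]
  have hact : ∀ t, y (t + 1 + τ) (σ (t + τ)) =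
      opinionUpdate W lam γ u (y (t + τ)) (σ (t + τ)) (x τ (σ (t + τ))) := fun t => by
    have hb :
        brAction A W α lam β γ u (x (t + τ)) (y (t + τ)) (σ (t + τ)) = x τ (σ (t + τ)) := by
      rw [← hτ (t + τ + 1) (by omega), h.action_succ, update_self]
    rw [Nat.add_right_comm, h.opinion_succ, update_self, hb]
  have hkeep : ∀ t j, j ≠ σ (t + τ) → y (t + 1 + τ) j = y (t + τ) j := fun t j hj => by
    rw [Nat.add_right_comm, h.opinion_succ, update_of_ne hj]
  have hT' : ∀ t i, ∃ s, t ≤ s ∧ s < t + T ∧ σ (s + τ) = i := fun t i => by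
    obtain ⟨s, h₁, h₂, h₃⟩ := hT (t + τ) i
    exact ⟨s - τ, by omega, by omega, by rwa [Nat.sub_add_cancel (by omega)]⟩
  obtain ⟨p, hp⟩ := exists_tendsto_of_async_contraction
    (F := fun z i => opinionUpdate W lam γ u z i (x τ i)) (y := fun t => y (t + τ)) hρ1
    (fun z w i => dist_opinionUpdate_le hW hWrow hρ z w i (x τ i)) hact hkeep hT'
  exact ⟨p, (tendsto_add_atTop_iff_nat τ).1 hp⟩

end IsBRTrajectory

end Model

theorem stmt12_general {n : ℕ} (A W : Fin n → Fin n → ℝ) (α lam β γ : ℝ)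
    (u : Fin n → ℝ)
    (hW : ∀ j k, 0 ≤ W j k)
    (hArow : ∀ j, ∑ k, A j k = 1) (hWrow : ∀ j, ∑ k, W j k = 1)
    (hα : 0 ≤ α) (hlam : lam ∈ Set.Ioo (0 : ℝ) 1) (hβ : β ∈ Set.Ioo (0 : ℝ) 1)
    (hγ : γ ∈ Set.Ioo (0 : ℝ) 1) (hu : ∀ j, u j ∈ Set.Icc (-1 : ℝ) 1)
    -- Assumption 1: symmetric layers and positive self-loops on the influence layer
    (hAsymm : ∀ j k, A j k = A k j) (hWsymm : ∀ j k, W j k = W k j)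
    (hAdiag : ∀ j, 0 < A j j)
    -- the trajectory of the coevolutionary model: σ t is the agent active at time t
    (x y : ℕ → Fin n → ℝ) (σ : ℕ → Fin n)
    (h0x : ∀ j, x 0 j = -1 ∨ x 0 j = 1) (h0y : ∀ j, y 0 j ∈ Set.Icc (-1 : ℝ) 1)
    (hupx : ∀ t, x (t + 1) (σ t) =
      brSign (deltaFn A W α lam β γ u (x t) (y t) (σ t)) (x t (σ t)))
    (hupy : ∀ t, y (t + 1) (σ t) =
      (1 - lam) * ((1 - γ) * (∑ j, W (σ t) j * y t j) + γ * u (σ t)) +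
        lam * brSign (deltaFn A W α lam β γ u (x t) (y t) (σ t)) (x t (σ t)))
    (hkeep : ∀ t j, j ≠ σ t → x (t + 1) j = x t j ∧ y (t + 1) j = y t j)
    -- Assumption 2: in every window of length T every agent activates at least once
    (T : ℕ) (hT : ∀ t : ℕ, ∀ i : Fin n, ∃ s : ℕ, t ≤ s ∧ s < t + T ∧ σ s = i) :
    ∃ xstar ystar : Fin n → ℝ,
      (∃ τ : ℕ, ∀ t, τ ≤ t → ∀ i, x t i = xstar i) ∧
      (∀ i, Tendsto (fun t => y t i) atTop (nhds (ystar i))) := by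
  have htraj : IsBRTrajectory A W α lam β γ u x y σ :=
    ⟨fun t => eq_update_iff.2 ⟨hupx t, fun j hj => (hkeep t j hj).1⟩,
      fun t => eq_update_iff.2 ⟨hupy t, fun j hj => (hkeep t j hj).2⟩⟩
  have hlam' := Set.Ioo_subset_Ioc_self hlam
  have hγ' := Set.Ioo_subset_Icc_self hγ
  obtain ⟨τ, hτ⟩ := exists_forall_ge_eq_of_eventually_succ_eq <|
    htraj.eventually_action_succ_eq hW hArow hWrow hAsymm hWsymm hAdiag hα hlam'
      (Set.Ioo_subset_Ico_self hβ) hγ' (fun j => abs_le.2 (hu j)) h0x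
      (fun j => abs_le.2 (h0y j))
  obtain ⟨ystar, hy⟩ := htraj.exists_tendsto_opinion hW hWrow hlam' hγ' hT hτ
  exact ⟨x τ, ystar, ⟨τ, fun t ht i => by rw [hτ t ht]⟩, tendsto_pi_nhds.1 hy⟩

theorem stmt12 {n : ℕ} (hn : 2 ≤ n) (A W : Fin n → Fin n → ℝ) (α lam β γ : ℝ)
    (u : Fin n → ℝ)
    (hA : ∀ j k, 0 ≤ A j k) (hW : ∀ j k, 0 ≤ W j k)
    (hArow : ∀ j, ∑ k, A j k = 1) (hWrow : ∀ j, ∑ k, W j k = 1)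
    (hAirr : FunIrreducible A) (hWirr : FunIrreducible W)
    (hα : 0 ≤ α) (hlam : lam ∈ Set.Ioo (0 : ℝ) 1) (hβ : β ∈ Set.Ioo (0 : ℝ) 1)
    (hγ : γ ∈ Set.Ioo (0 : ℝ) 1) (hu : ∀ j, u j ∈ Set.Icc (-1 : ℝ) 1)
    -- Assumption 1: symmetric layers and positive self-loops on the influence layer
    (hAsymm : ∀ j k, A j k = A k j) (hWsymm : ∀ j k, W j k = W k j)
    (hAdiag : ∀ j, 0 < A j j)
    -- the trajectory of the coevolutionary model: σ t is the agent active at time t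
    (x y : ℕ → Fin n → ℝ) (σ : ℕ → Fin n)
    (h0x : ∀ j, x 0 j = -1 ∨ x 0 j = 1) (h0y : ∀ j, y 0 j ∈ Set.Icc (-1 : ℝ) 1)
    (hupx : ∀ t, x (t + 1) (σ t) =
      brSign (deltaFn A W α lam β γ u (x t) (y t) (σ t)) (x t (σ t)))
    (hupy : ∀ t, y (t + 1) (σ t) =
      (1 - lam) * ((1 - γ) * (∑ j, W (σ t) j * y t j) + γ * u (σ t)) +
        lam * brSign (deltaFn A W α lam β γ u (x t) (y t) (σ t)) (x t (σ t)))
    (hkeep : ∀ t j, j ≠ σ t → x (t + 1) j = x t j ∧ y (t + 1) j = y t j)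
    -- Assumption 2: in every window of length T every agent activates at least once
    (T : ℕ) (hT : ∀ t : ℕ, ∀ i : Fin n, ∃ s : ℕ, t ≤ s ∧ s < t + T ∧ σ s = i) :
    ∃ xstar ystar : Fin n → ℝ,
      (∃ τ : ℕ, ∀ t, τ ≤ t → ∀ i, x t i = xstar i) ∧
      (∀ i, Tendsto (fun t => y t i) atTop (nhds (ystar i))) :=
  stmt12_general A W α lam β γ u hW hArow hWrow hα hlam hβ hγ hu hAsymm hWsymm hAdiag x y σ h0x h0y
    hupx hupy hkeep T hT
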